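/- arXiv:2107.09606 — 12 statements merged into one kernel-verified Lean document; each statement's English description precedes it below -/
import Mathlib

section
/- Let H be a real Hilbert space, let {W_i}_{i∈I} be a family of closed subspaces of H with orthogonal projections P_i, and let {v_i}_{i∈I} be positive weights. Suppose the family of projections {P_i}_{i∈I} does phase retrieval for H, and for each i ∈ I the family of vectors {f_{ij}}_{j∈J_i} ⊆ W_i does norm retrieval for W_i. Then the family {v_i f_{ij}}_{j∈J_i, i∈I} does phase retrieval for H. -/
open RealInnerProductSpace

/-- If the projections onto subspaces `W i` do phase retrieval for `H`, and for each `i`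
the vectors `f i j ∈ W i` do norm retrieval for `W i`, then the weighted family
`v i • f i j` does phase retrieval for `H`. -/
theorem fusion_phase_retrieval_of_local_norm_retrieval
    {H : Type*} [NormedAddCommGroup H] [InnerProductSpace ℝ H] [CompleteSpace H]
    {ι : Type*} (W : ι → Submodule ℝ H) [∀ i, CompleteSpace (W i)]
    (J : ι → Type*) (f : ∀ i, J i → H) (hf : ∀ i j, f i j ∈ W i)
    (v : ι → ℝ) (hv : ∀ i, 0 < v i)
    (hPR : ∀ x y : H,
      (∀ i, ‖((W i).orthogonalProjectionOnto x : H)‖ = ‖((W i).orthogonalProjectionOnto y : H)‖) →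
      x = y ∨ x = -y)
    (hNR : ∀ i, ∀ x y : H, x ∈ W i → y ∈ W i →
      (∀ j, |⟪x, f i j⟫| = |⟪y, f i j⟫|) → ‖x‖ = ‖y‖) :
    ∀ x y : H, (∀ i (j : J i), |⟪x, v i • f i j⟫| = |⟪y, v i • f i j⟫|) →
      x = y ∨ x = -y := by
  intro x y h
  apply hPR
  intro i
  have key : ∀ z : H, ∀ j : J i, ⟪z, f i j⟫ = ⟪((W i).orthogonalProjectionOnto z : H), f i j⟫ := by
    intro z j
    have h0 := (W i).starProjection_inner_eq_zero z (f i j) (hf i j)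
    rw [Submodule.starProjection_apply] at h0
    have := inner_sub_left (𝕜 := ℝ) z ((W i).orthogonalProjectionOnto z : H) (f i j)
    rw [this] at h0
    linarith
  apply hNR i _ _ ((W i).orthogonalProjectionOnto x).2 ((W i).orthogonalProjectionOnto y).2
  intro j
  have hj := h i j
  rw [inner_smul_right, inner_smul_right, abs_mul, abs_mul] at hj
  have := mul_left_cancel₀ (ne_of_gt (abs_pos.mpr (ne_of_gt (hv i)))) hj
  rw [key x j, key y j] at this
  exact this
end

section
/- Let H be a real Hilbert space, let {W_i}_{i∈I} be a family of closed subspaces of H with orthogonal projections P_i, and let {v_i}_{i∈I} be positive weights. Suppose the family of projections {P_i}_{i∈I} does norm retrieval for H, and for each i ∈ I the family of vectors {f_{ij}}_{j∈J_i} ⊆ W_i does norm retrieval for W_i. Then the family {v_i f_{ij}}_{j∈J_i, i∈I} does norm retrieval for H. -/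
open RealInnerProductSpace

/-- If the projections onto subspaces `W i` do norm retrieval for `H`, and for each `i`
the vectors `f i j ∈ W i` do norm retrieval for `W i`, then the weighted family
`v i • f i j` does norm retrieval for `H`. -/
theorem fusion_norm_retrieval_of_local_norm_retrieval
    {H : Type*} [NormedAddCommGroup H] [InnerProductSpace ℝ H] [CompleteSpace H]
    {ι : Type*} (W : ι → Submodule ℝ H) [∀ i, CompleteSpace (W i)]
    (J : ι → Type*) (f : ∀ i, J i → H) (hf : ∀ i j, f i j ∈ W i)
    (v : ι → ℝ) (hv : ∀ i, 0 < v i)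
    (hNRproj : ∀ x y : H,
      (∀ i, ‖(Submodule.orthogonalProjectionOnto (W i) x : H)‖ = ‖(Submodule.orthogonalProjectionOnto (W i) y : H)‖) →
      ‖x‖ = ‖y‖)
    (hNR : ∀ i, ∀ x y : H, x ∈ W i → y ∈ W i →
      (∀ j, |⟪x, f i j⟫| = |⟪y, f i j⟫|) → ‖x‖ = ‖y‖) :
    ∀ x y : H, (∀ i (j : J i), |⟪x, v i • f i j⟫| = |⟪y, v i • f i j⟫|) →
      ‖x‖ = ‖y‖ := by
  intro x y h
  apply hNRproj
  intro i
  apply hNR i _ _ (Submodule.orthogonalProjectionOnto (W i) x).2 (Submodule.orthogonalProjectionOnto (W i) y).2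
  intro j
  have key : ∀ z : H, ⟪((Submodule.orthogonalProjectionOnto (W i) z : H)), f i j⟫ = ⟪z, f i j⟫ := by
    intro z
    have h0 := Submodule.starProjection_inner_eq_zero z (f i j) (hf i j)
    rw [inner_sub_left, sub_eq_zero] at h0
    exact h0.symm
  rw [key x, key y]
  have h' := h i j
  rw [inner_smul_right, inner_smul_right, abs_mul, abs_mul] at h'
  exact mul_left_cancel₀ (ne_of_gt (abs_pos.mpr (hv i).ne')) h'
end

section
/- Let H be a real Hilbert space and let {P_i}_{i∈I} be a family of orthogonal projections on H that does norm retrieval. For each i ∈ I let Q_i be an orthogonal projection on H whose range is contained in the range of P_i (equivalently P_i Q_i = Q_i = Q_i P_i). Then each P_i − Q_i is an orthogonal projection, and the combined family of projections {Q_i}_{i∈I} ∪ {P_i − Q_i}_{i∈I} does norm retrieval for H. -/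
open RealInnerProductSpace

/-- If the orthogonal projections `P i` do norm retrieval, and `Q i` are orthogonal
projections with range contained in the range of `P i` (i.e. `P i ∘ Q i = Q i = Q i ∘ P i`),
then each `P i - Q i` is an orthogonal projection, and the combined family
`{Q i} ∪ {P i - Q i}` does norm retrieval. -/
theorem split_projections_norm_retrieval
    {H : Type*} [NormedAddCommGroup H] [InnerProductSpace ℝ H] [CompleteSpace H]
    {ι : Type*} (P Q : ι → H →L[ℝ] H)
    (hPidem : ∀ i, (P i).comp (P i) = P i)
    (hPsymm : ∀ i, ∀ x y : H, ⟪P i x, y⟫ = ⟪x, P i y⟫)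
    (hQidem : ∀ i, (Q i).comp (Q i) = Q i)
    (hQsymm : ∀ i, ∀ x y : H, ⟪Q i x, y⟫ = ⟪x, Q i y⟫)
    (hPQ : ∀ i, (P i).comp (Q i) = Q i)
    (hQP : ∀ i, (Q i).comp (P i) = Q i)
    (hNR : ∀ x y : H, (∀ i, ‖P i x‖ = ‖P i y‖) → ‖x‖ = ‖y‖) :
    (∀ i, (P i - Q i).comp (P i - Q i) = P i - Q i ∧
      ∀ x y : H, ⟪(P i - Q i) x, y⟫ = ⟪x, (P i - Q i) y⟫) ∧
    (∀ x y : H,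
      ((∀ i, ‖Q i x‖ = ‖Q i y‖) ∧ (∀ i, ‖(P i - Q i) x‖ = ‖(P i - Q i) y‖)) →
      ‖x‖ = ‖y‖) := by
  have happly : ∀ (i : ι) (x : H), P i (Q i x) = Q i x := fun i x =>
    congrArg (fun T : H →L[ℝ] H => T x) (hPQ i)
  have happly' : ∀ (i : ι) (x : H), Q i (P i x) = Q i x := fun i x =>
    congrArg (fun T : H →L[ℝ] H => T x) (hQP i)
  have happlyP : ∀ (i : ι) (x : H), P i (P i x) = P i x := fun i x =>
    congrArg (fun T : H →L[ℝ] H => T x) (hPidem i)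
  have happlyQ : ∀ (i : ι) (x : H), Q i (Q i x) = Q i x := fun i x =>
    congrArg (fun T : H →L[ℝ] H => T x) (hQidem i)
  -- orthogonality: ⟪Q i x, (P i - Q i) x⟫ = 0
  have horth : ∀ (i : ι) (x : H), ⟪Q i x, P i x - Q i x⟫ = 0 := by
    intro i x
    have h1 : ⟪Q i x, P i x⟫ = ⟪Q i x, Q i x⟫ := by
      calc ⟪Q i x, P i x⟫ = ⟪x, Q i (P i x)⟫ := hQsymm i x (P i x)
        _ = ⟪x, Q i x⟫ := by rw [happly']
        _ = ⟪Q i x, x⟫ := real_inner_comm _ _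
        _ = ⟪Q i (Q i x), x⟫ := by rw [happlyQ]
        _ = ⟪Q i x, Q i x⟫ := by rw [hQsymm]
    rw [inner_sub_right, h1, sub_self]
  -- Pythagoras: ‖P i x‖^2 = ‖Q i x‖^2 + ‖P i x - Q i x‖^2
  have hpyth : ∀ (i : ι) (x : H), ‖P i x‖ ^ 2 = ‖Q i x‖ ^ 2 + ‖P i x - Q i x‖ ^ 2 := by
    intro i x
    have h2 : Q i x + (P i x - Q i x) = P i x := by abel
    have h3 := norm_add_sq_real (Q i x) (P i x - Q i x)
    rw [h2, horth i x] at h3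
    linarith
  constructor
  · intro i
    refine ⟨?_, ?_⟩
    · ext x
      simp only [ContinuousLinearMap.comp_apply, ContinuousLinearMap.sub_apply, map_sub]
      rw [happlyP, happlyQ, happly, happly']
      abel
    · intro x y
      simp only [ContinuousLinearMap.sub_apply, inner_sub_left, inner_sub_right,
        hPsymm i, hQsymm i]
  · rintro x y ⟨hQ, hPQ'⟩
    apply hNR
    intro i
    have h1 : ‖P i x‖ ^ 2 = ‖P i y‖ ^ 2 := by
      rw [hpyth i x, hpyth i y, hQ i]
      have := hPQ' i
      simp only [ContinuousLinearMap.sub_apply] at this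
      rw [this]
    calc ‖P i x‖ = Real.sqrt (‖P i x‖ ^ 2) := (Real.sqrt_sq (norm_nonneg _)).symm
      _ = Real.sqrt (‖P i y‖ ^ 2) := by rw [h1]
      _ = ‖P i y‖ := Real.sqrt_sq (norm_nonneg _)
end

section
/- Let {W_i}_{i∈I} be a family of subspaces of ℝ^n whose orthogonal projections {P_i}_{i∈I} do norm retrieval. Then for every subset J ⊆ I and all vectors x, y ∈ ℝ^n such that x ⊥ W_j for all j ∈ J and y ⊥ W_j for all j ∈ I \ J, one has ⟨x, y⟩ = 0. -/
open RealInnerProductSpace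

/-- If the projections onto subspaces `W i` of `ℝ^n` do norm retrieval, then for every
subset `J` of the index set, any vector orthogonal to all `W j`, `j ∈ J`, is orthogonal
to any vector orthogonal to all `W j`, `j ∉ J`. -/
theorem norm_retrieval_perp_subspaces
    {n : ℕ} {ι : Type*} (W : ι → Submodule ℝ (EuclideanSpace ℝ (Fin n)))
    (hNR : ∀ x y : EuclideanSpace ℝ (Fin n),
      (∀ i, ‖(Submodule.orthogonalProjection (W i) x : EuclideanSpace ℝ (Fin n))‖ =
            ‖(Submodule.orthogonalProjection (W i) y : EuclideanSpace ℝ (Fin n))‖) →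
      ‖x‖ = ‖y‖) :
    ∀ (J : Set ι) (x y : EuclideanSpace ℝ (Fin n)),
      (∀ j ∈ J, ∀ w ∈ W j, ⟪x, w⟫ = 0) →
      (∀ j ∉ J, ∀ w ∈ W j, ⟪y, w⟫ = 0) →
      ⟪x, y⟫ = 0 := by
  intro J x y hx hy
  have hPx : ∀ j ∈ J, Submodule.orthogonalProjection (W j) x = 0 := by
    intro j hj
    exact Submodule.orthogonalProjectionOnto_apply_of_mem_orthogonal
      (fun w hw => by rw [real_inner_comm]; exact hx j hj w hw)
  have hPy : ∀ j ∉ J, Submodule.orthogonalProjection (W j) y = 0 := by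
    intro j hj
    exact Submodule.orthogonalProjectionOnto_apply_of_mem_orthogonal
      (fun w hw => by rw [real_inner_comm]; exact hy j hj w hw)
  have key : ‖x + y‖ = ‖x - y‖ := by
    apply hNR
    intro i
    by_cases hi : i ∈ J
    · rw [map_add, map_sub, hPx i hi, zero_add, zero_sub, Submodule.coe_neg, norm_neg]
    · rw [map_add, map_sub, hPy i hi, add_zero, sub_zero]
  have := real_inner_eq_norm_add_mul_self_sub_norm_mul_self_sub_norm_mul_self_div_two x y
  -- alternative: use parallelogram-style identity
  have h4 : ⟪x, y⟫ = (‖x + y‖ * ‖x + y‖ - ‖x - y‖ * ‖x - y‖) / 4 := by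
    rw [← real_inner_self_eq_norm_mul_norm, ← real_inner_self_eq_norm_mul_norm,
      real_inner_add_add_self, real_inner_sub_sub_self]
    ring
  rw [h4, key]
  ring
end

section
/- Let {e_j}_{j=1}^n be the canonical orthonormal basis of ℝ^n, let I_1, …, I_m be subsets of {1, …, n}, and set W_i = span{e_j : j ∈ I_i} for i = 1, …, m. Suppose there exist a positive integer K and signs ε_i ∈ {−1, 1} such that for every j ∈ {1, …, n}, ∑_{i : j ∈ I_i} ε_i = K. Then the family of subspaces {W_i}_{i=1}^m does norm retrieval for ℝ^n. -/
open RealInnerProductSpace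

lemma coord_proj_eq {n : ℕ} (s : Finset (Fin n)) (x : EuclideanSpace ℝ (Fin n)) :
    (Submodule.orthogonalProjectionOnto
      (Submodule.span ℝ ((fun j => EuclideanSpace.single j (1 : ℝ)) '' (s : Set (Fin n)))) x :
      EuclideanSpace ℝ (Fin n)) = ∑ j ∈ s, x j • EuclideanSpace.single j (1 : ℝ) := by
  set S := Submodule.span ℝ ((fun j => EuclideanSpace.single j (1 : ℝ)) '' (s : Set (Fin n)))
  set v : EuclideanSpace ℝ (Fin n) := ∑ j ∈ s, x j • EuclideanSpace.single j (1 : ℝ) with hv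
  have hvj : ∀ j ∈ s, v j = x j := by
    intro j hj
    simp only [hv]
    rw [WithLp.ofLp_sum, Finset.sum_apply]
    simp only [WithLp.ofLp_smul, Pi.smul_apply, EuclideanSpace.single_apply, smul_eq_mul]
    rw [Finset.sum_eq_single j]
    · simp
    · intro b _ hb; simp [Ne.symm hb]
    · intro h; exact absurd hj h
  rw [Submodule.coe_orthogonalProjectionOnto_apply]
  apply Submodule.eq_starProjection_of_mem_of_inner_eq_zero
  · exact Submodule.sum_mem _ fun j hj =>
      Submodule.smul_mem _ _ (Submodule.subset_span ⟨j, by simpa using hj, rfl⟩)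
  · intro w hw
    induction hw using Submodule.span_induction with
    | mem z hz =>
      obtain ⟨j, hj, rfl⟩ := hz
      rw [real_inner_comm, EuclideanSpace.inner_single_left]
      simp only [map_one, one_mul, PiLp.sub_apply]
      rw [hvj j (by simpa using hj)]
      ring
    | zero => simp
    | add a b _ _ ha hb => rw [inner_add_right, ha, hb, add_zero]
    | smul c a _ ha => rw [inner_smul_right, ha, mul_zero]

lemma coord_proj_normsq {n : ℕ} (s : Finset (Fin n)) (x : EuclideanSpace ℝ (Fin n)) :
    ‖(Submodule.orthogonalProjectionOnto
      (Submodule.span ℝ ((fun j => EuclideanSpace.single j (1 : ℝ)) '' (s : Set (Fin n)))) x :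
      EuclideanSpace ℝ (Fin n))‖ ^ 2 = ∑ j ∈ s, x j ^ 2 := by
  rw [coord_proj_eq]
  rw [← real_inner_self_eq_norm_sq]
  rw [inner_sum]
  refine Finset.sum_congr rfl fun j hj => ?_
  rw [real_inner_smul_right, EuclideanSpace.inner_single_right]
  simp only [map_one, one_mul, Finset.sum_apply]
  rw [WithLp.ofLp_sum, Finset.sum_apply]
  simp only [WithLp.ofLp_smul, Pi.smul_apply, EuclideanSpace.single_apply, smul_eq_mul]
  rw [Finset.sum_eq_single j]
  · simp; ring
  · intro b _ hb; simp [Ne.symm hb]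
  · intro h; exact absurd hj h

/-- If `W i = span {e j : j ∈ I i}` are coordinate subspaces of `ℝ^n` and there are signs
`ε i = ±1` and a positive integer `K` with `∑_{i : j ∈ I i} ε i = K` for every coordinate
`j`, then the family `{W i}` does norm retrieval for `ℝ^n`. -/
theorem coordinate_subspaces_norm_retrieval
    {n m : ℕ} (I : Fin m → Finset (Fin n))
    (W : Fin m → Submodule ℝ (EuclideanSpace ℝ (Fin n)))
    (hW : ∀ i, W i =
      Submodule.span ℝ ((fun j => EuclideanSpace.single j (1 : ℝ)) '' (I i : Set (Fin n))))
    (K : ℕ) (hK : 0 < K) (ε : Fin m → ℝ) (hε : ∀ i, ε i = 1 ∨ ε i = -1)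
    (hsum : ∀ j : Fin n, ∑ i ∈ Finset.univ.filter (fun i => j ∈ I i), ε i = (K : ℝ)) :
    ∀ x y : EuclideanSpace ℝ (Fin n),
      (∀ i, ‖(Submodule.orthogonalProjectionOnto (W i) x : EuclideanSpace ℝ (Fin n))‖ =
            ‖(Submodule.orthogonalProjectionOnto (W i) y : EuclideanSpace ℝ (Fin n))‖) →
      ‖x‖ = ‖y‖ := by
  have key : ∀ z : EuclideanSpace ℝ (Fin n),
      ∑ i, ε i * ‖(Submodule.orthogonalProjectionOnto (W i) z : EuclideanSpace ℝ (Fin n))‖ ^ 2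
        = (K : ℝ) * ‖z‖ ^ 2 := by
    intro z
    have hz : ‖z‖ ^ 2 = ∑ j, z j ^ 2 := by
      rw [← real_inner_self_eq_norm_sq, PiLp.inner_apply]
      refine Finset.sum_congr rfl fun j _ => ?_
      simp [RCLike.inner_apply]
    calc ∑ i, ε i * ‖(Submodule.orthogonalProjectionOnto (W i) z : EuclideanSpace ℝ (Fin n))‖ ^ 2
        = ∑ i, ε i * ∑ j ∈ I i, z j ^ 2 := by
          refine Finset.sum_congr rfl fun i _ => ?_
          rw [hW i, coord_proj_normsq]
      _ = ∑ i, ∑ j, if j ∈ I i then ε i * z j ^ 2 else 0 := by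
          refine Finset.sum_congr rfl fun i _ => ?_
          rw [Finset.mul_sum, ← Finset.sum_filter, Finset.filter_univ_mem]
      _ = ∑ j, ∑ i, if j ∈ I i then ε i * z j ^ 2 else 0 := Finset.sum_comm
      _ = ∑ j : Fin n, (K : ℝ) * z j ^ 2 := by
          refine Finset.sum_congr rfl fun j _ => ?_
          rw [← Finset.sum_filter, ← Finset.sum_mul, hsum j]
      _ = (K : ℝ) * ‖z‖ ^ 2 := by rw [← Finset.mul_sum, hz]
  intro x y h
  have h2 : (K : ℝ) * ‖x‖ ^ 2 = (K : ℝ) * ‖y‖ ^ 2 := by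
    rw [← key x, ← key y]
    exact Finset.sum_congr rfl fun i _ => by rw [h i]
  have hKne : (K : ℝ) ≠ 0 := Nat.cast_ne_zero.mpr hK.ne'
  have h3 : ‖x‖ ^ 2 = ‖y‖ ^ 2 := mul_left_cancel₀ hKne h2
  nlinarith [norm_nonneg x, norm_nonneg y]
end

section
/- Let {e_j}_{j=1}^4 be the canonical orthonormal basis of ℝ^4 and set W_1 = span{e_1, e_4}, W_2 = span{e_2, e_4}, W_3 = span{e_3, e_4}, W_4 = span{e_4}, with index sets I_1 = {1,4}, I_2 = {2,4}, I_3 = {3,4}, I_4 = {4}. Then: (a) the family {W_i}_{i=1}^4 does norm retrieval for ℝ^4; and (b) there is no subset I ⊆ {1,2,3,4}, no signs ε_i ∈ {−1,1} for i ∈ I, and no positive integer K such that ∑_{i∈I : j∈I_i} ε_i = K for every j ∈ {1,2,3,4}. -/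
open RealInnerProductSpace

lemma proj_pair (a b : Fin 4) (hab : a ≠ b) (x : EuclideanSpace ℝ (Fin 4)) :
    (Submodule.orthogonalProjection (Submodule.span ℝ
        {EuclideanSpace.single a (1 : ℝ), EuclideanSpace.single b (1 : ℝ)}) x :
      EuclideanSpace ℝ (Fin 4)) =
      x a • EuclideanSpace.single a (1 : ℝ) + x b • EuclideanSpace.single b (1 : ℝ) := by
  rw [← Submodule.starProjection_apply]
  apply Submodule.eq_starProjection_of_mem_of_inner_eq_zero
  · exact Submodule.add_mem _
      (Submodule.smul_mem _ _ (Submodule.subset_span (by simp)))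
      (Submodule.smul_mem _ _ (Submodule.subset_span (by simp)))
  · intro w hw
    rw [Submodule.mem_span_pair] at hw
    obtain ⟨c, d, rfl⟩ := hw
    rw [inner_add_right, real_inner_smul_right, real_inner_smul_right,
      EuclideanSpace.inner_single_right, EuclideanSpace.inner_single_right]
    have h1 : ((x - (x a • EuclideanSpace.single a (1:ℝ) + x b • EuclideanSpace.single b 1) : EuclideanSpace ℝ (Fin 4))) a = 0 := by
      simp only [PiLp.sub_apply, PiLp.add_apply, PiLp.smul_apply, EuclideanSpace.single_apply,
        smul_eq_mul]
      rw [if_pos trivial, if_neg hab]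
      ring
    have h2 : ((x - (x a • EuclideanSpace.single a (1:ℝ) + x b • EuclideanSpace.single b 1) : EuclideanSpace ℝ (Fin 4))) b = 0 := by
      simp only [PiLp.sub_apply, PiLp.add_apply, PiLp.smul_apply, EuclideanSpace.single_apply,
        smul_eq_mul]
      rw [if_pos trivial, if_neg (fun h : b = a => hab h.symm)]
      ring
    simp [h1, h2]

lemma proj_single (a : Fin 4) (x : EuclideanSpace ℝ (Fin 4)) :
    (Submodule.orthogonalProjection (Submodule.span ℝ {EuclideanSpace.single a (1 : ℝ)}) x :
      EuclideanSpace ℝ (Fin 4)) = x a • EuclideanSpace.single a (1 : ℝ) := by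
  rw [← Submodule.starProjection_apply]
  apply Submodule.eq_starProjection_of_mem_of_inner_eq_zero
  · exact Submodule.smul_mem _ _ (Submodule.subset_span rfl)
  · intro w hw
    rw [Submodule.mem_span_singleton] at hw
    obtain ⟨c, rfl⟩ := hw
    rw [real_inner_smul_right, EuclideanSpace.inner_single_right]
    have h1 : ((x - x a • EuclideanSpace.single a (1:ℝ) : EuclideanSpace ℝ (Fin 4))) a = 0 := by
      simp [EuclideanSpace.single_apply]
    simp [h1]

lemma norm_pair (a b : Fin 4) (hab : a ≠ b) (x : EuclideanSpace ℝ (Fin 4)) :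
    ‖x a • EuclideanSpace.single a (1 : ℝ) + x b • EuclideanSpace.single b (1 : ℝ)‖ ^ 2 =
      x a ^ 2 + x b ^ 2 := by
  rw [← real_inner_self_eq_norm_sq]
  rw [inner_add_add_self, real_inner_smul_left, real_inner_smul_left, real_inner_smul_left,
    real_inner_smul_right, real_inner_smul_right, real_inner_smul_right,
    EuclideanSpace.inner_single_right, EuclideanSpace.inner_single_right,
    EuclideanSpace.inner_single_right]
  simp [EuclideanSpace.single_apply, hab, hab.symm]
  simp [norm_smul, sq_abs, mul_pow]
  ring

lemma euc_norm_sq (x : EuclideanSpace ℝ (Fin 4)) :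
    ‖x‖ ^ 2 = x 0 ^ 2 + x 1 ^ 2 + x 2 ^ 2 + x 3 ^ 2 := by
  rw [← real_inner_self_eq_norm_sq]
  rw [PiLp.inner_apply]
  simp [Fin.sum_univ_four, sq]


/-- The four coordinate subspaces of `ℝ^4`: `W 0 = span{e₁,e₄}`, `W 1 = span{e₂,e₄}`,
`W 2 = span{e₃,e₄}`, `W 3 = span{e₄}` (0-indexed coordinates). -/
def exampleSubspaces : Fin 4 → Submodule ℝ (EuclideanSpace ℝ (Fin 4)) :=
  ![Submodule.span ℝ {EuclideanSpace.single 0 (1 : ℝ), EuclideanSpace.single 3 (1 : ℝ)},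
    Submodule.span ℝ {EuclideanSpace.single 1 (1 : ℝ), EuclideanSpace.single 3 (1 : ℝ)},
    Submodule.span ℝ {EuclideanSpace.single 2 (1 : ℝ), EuclideanSpace.single 3 (1 : ℝ)},
    Submodule.span ℝ {EuclideanSpace.single 3 (1 : ℝ)}]

/-- The corresponding index sets `I₁ = {1,4}`, `I₂ = {2,4}`, `I₃ = {3,4}`, `I₄ = {4}`
(0-indexed). -/
def exampleIndexSets : Fin 4 → Finset (Fin 4) :=
  ![{0, 3}, {1, 3}, {2, 3}, {3}]

/-- (a) The family `{W i}` does norm retrieval for `ℝ^4`, but (b) there is no subset of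
indices, signs `ε i = ±1` and positive integer `K` with `∑_{i : j ∈ I i} ε i = K` for all
`j`.  Hence the converse of the signed-indicator-sum criterion for norm retrieval fails. -/
theorem norm_retrieval_converse_fails :
    (∀ x y : EuclideanSpace ℝ (Fin 4),
      (∀ i, ‖(Submodule.orthogonalProjection (exampleSubspaces i) x : EuclideanSpace ℝ (Fin 4))‖ =
            ‖(Submodule.orthogonalProjection (exampleSubspaces i) y : EuclideanSpace ℝ (Fin 4))‖) →
      ‖x‖ = ‖y‖) ∧
    ¬ ∃ (S : Finset (Fin 4)) (ε : Fin 4 → ℝ) (K : ℕ), 0 < K ∧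
        (∀ i ∈ S, ε i = 1 ∨ ε i = -1) ∧
        (∀ j : Fin 4, ∑ i ∈ S.filter (fun i => j ∈ exampleIndexSets i), ε i = (K : ℝ)) := by
  constructor
  · intro x y hxy
    have p0 : ∀ z : EuclideanSpace ℝ (Fin 4),
        ‖(Submodule.orthogonalProjection (exampleSubspaces 0) z : EuclideanSpace ℝ (Fin 4))‖ ^ 2
          = z 0 ^ 2 + z 3 ^ 2 := by
      intro z
      have h : exampleSubspaces 0 = Submodule.span ℝ
          {EuclideanSpace.single 0 (1 : ℝ), EuclideanSpace.single 3 (1 : ℝ)} := rfl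
      rw [h, proj_pair 0 3 (by decide), norm_pair 0 3 (by decide)]
    have p1 : ∀ z : EuclideanSpace ℝ (Fin 4),
        ‖(Submodule.orthogonalProjection (exampleSubspaces 1) z : EuclideanSpace ℝ (Fin 4))‖ ^ 2
          = z 1 ^ 2 + z 3 ^ 2 := by
      intro z
      have h : exampleSubspaces 1 = Submodule.span ℝ
          {EuclideanSpace.single 1 (1 : ℝ), EuclideanSpace.single 3 (1 : ℝ)} := rfl
      rw [h, proj_pair 1 3 (by decide), norm_pair 1 3 (by decide)]
    have p2 : ∀ z : EuclideanSpace ℝ (Fin 4),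
        ‖(Submodule.orthogonalProjection (exampleSubspaces 2) z : EuclideanSpace ℝ (Fin 4))‖ ^ 2
          = z 2 ^ 2 + z 3 ^ 2 := by
      intro z
      have h : exampleSubspaces 2 = Submodule.span ℝ
          {EuclideanSpace.single 2 (1 : ℝ), EuclideanSpace.single 3 (1 : ℝ)} := rfl
      rw [h, proj_pair 2 3 (by decide), norm_pair 2 3 (by decide)]
    have p3 : ∀ z : EuclideanSpace ℝ (Fin 4),
        ‖(Submodule.orthogonalProjection (exampleSubspaces 3) z : EuclideanSpace ℝ (Fin 4))‖ ^ 2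
          = z 3 ^ 2 := by
      intro z
      have h : exampleSubspaces 3 = Submodule.span ℝ
          {EuclideanSpace.single 3 (1 : ℝ)} := rfl
      rw [h, proj_single 3, norm_smul]
      simp [sq_abs, mul_pow]
    have q0 : x 0 ^ 2 + x 3 ^ 2 = y 0 ^ 2 + y 3 ^ 2 := by
      rw [← p0 x, ← p0 y, hxy 0]
    have q1 : x 1 ^ 2 + x 3 ^ 2 = y 1 ^ 2 + y 3 ^ 2 := by
      rw [← p1 x, ← p1 y, hxy 1]
    have q2 : x 2 ^ 2 + x 3 ^ 2 = y 2 ^ 2 + y 3 ^ 2 := by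
      rw [← p2 x, ← p2 y, hxy 2]
    have q3 : x 3 ^ 2 = y 3 ^ 2 := by
      rw [← p3 x, ← p3 y, hxy 3]
    have hsq : ‖x‖ ^ 2 = ‖y‖ ^ 2 := by
      rw [euc_norm_sq, euc_norm_sq]; linarith
    calc ‖x‖ = Real.sqrt (‖x‖ ^ 2) := (Real.sqrt_sq (norm_nonneg x)).symm
      _ = Real.sqrt (‖y‖ ^ 2) := by rw [hsq]
      _ = ‖y‖ := Real.sqrt_sq (norm_nonneg y)
  · rintro ⟨S, ε, K, hK, hε, hsum⟩
    have hK1 : (1 : ℝ) ≤ (K : ℝ) := by exact_mod_cast hK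
    have key : ∀ j : Fin 4, ∑ i ∈ S.filter (fun i => j ∈ exampleIndexSets i), ε i
        = ∑ i : Fin 4, if j ∈ exampleIndexSets i ∧ i ∈ S then ε i else 0 := by
      intro j
      have hset : S.filter (fun i => j ∈ exampleIndexSets i)
          = Finset.univ.filter (fun i => j ∈ exampleIndexSets i ∧ i ∈ S) := by
        ext i
        simp only [Finset.mem_filter, Finset.mem_univ, true_and]
        exact and_comm
      rw [hset, Finset.sum_filter]
    have e0 := hsum 0; have e1 := hsum 1; have e2 := hsum 2; have e3 := hsum 3
    rw [key 0, Fin.sum_univ_four] at e0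
    rw [key 1, Fin.sum_univ_four] at e1
    rw [key 2, Fin.sum_univ_four] at e2
    rw [key 3, Fin.sum_univ_four] at e3
    simp only [exampleIndexSets, Matrix.cons_val_zero, Matrix.cons_val_one, Matrix.head_cons,
      Matrix.cons_val_two, Matrix.tail_cons, Matrix.cons_val_three] at e0 e1 e2 e3
    simp only [Finset.mem_insert, Finset.mem_singleton, show ((0:Fin 4) = 3) = False by simp, show ((0:Fin 4) = 1) = False by simp,
      show ((1:Fin 4) = 0) = False by simp,
      show ((0:Fin 4) = 2) = False by simp, show ((1:Fin 4) = 3) = False by simp,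
      show ((1:Fin 4) = 2) = False by simp, show ((2:Fin 4) = 0) = False by simp,
      show ((2:Fin 4) = 1) = False by simp, show ((2:Fin 4) = 3) = False by simp,
      show ((0:Fin 4) = 0) = True by simp, show ((1:Fin 4) = 1) = True by simp,
      show ((2:Fin 4) = 2) = True by simp, show ((3:Fin 4) = 3) = True by simp,
      show ((3:Fin 4) = 0) = False by simp, show ((3:Fin 4) = 1) = False by simp,
      show ((3:Fin 4) = 2) = False by simp, true_or, or_true, false_or, or_false,
      true_and, false_and, if_true, if_false, add_zero, zero_add] at e0 e1 e2 e3
    by_cases h0 : (0 : Fin 4) ∈ S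
    · by_cases h1 : (1 : Fin 4) ∈ S
      · by_cases h2 : (2 : Fin 4) ∈ S
        · simp only [h0, h1, h2, if_true] at e0 e1 e2 e3
          by_cases h3 : (3 : Fin 4) ∈ S
          · simp only [h3, if_true] at e3
            rcases hε 3 h3 with h | h <;> linarith
          · simp only [h3, if_false] at e3
            linarith
        · simp only [h2, if_false] at e2; linarith
      · simp only [h1, if_false] at e1; linarith
    · simp only [h0, if_false] at e0; linarith
end

section
/- In ℝ^3 with canonical orthonormal basis {e_1, e_2, e_3}, let W_1 = span{e_2, e_3}, W_2 = span{e_1, e_3}, and W_3 = span{(e_1+e_2)/√2, e_3}. Then the family of hyperplanes {W_1, W_2, W_3} does norm retrieval for ℝ^3, even though the normal vectors e_1, e_2, (e_1−e_2)/√2 spanning their orthogonal complements are linearly dependent. -/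
open RealInnerProductSpace

/-- The three hyperplanes `W 0 = span{e₂,e₃}`, `W 1 = span{e₁,e₃}`,
`W 2 = span{(e₁+e₂)/√2, e₃}` of `ℝ^3` (0-indexed coordinates). -/
noncomputable def threeHyperplanes : Fin 3 → Submodule ℝ (EuclideanSpace ℝ (Fin 3)) :=
  ![Submodule.span ℝ {EuclideanSpace.single 1 (1 : ℝ), EuclideanSpace.single 2 (1 : ℝ)},
    Submodule.span ℝ {EuclideanSpace.single 0 (1 : ℝ), EuclideanSpace.single 2 (1 : ℝ)},
    Submodule.span ℝ
      {(Real.sqrt 2)⁻¹ • (EuclideanSpace.single 0 (1 : ℝ) + EuclideanSpace.single 1 (1 : ℝ)),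
       EuclideanSpace.single 2 (1 : ℝ)}]

lemma mem_orth_span {E : Type*} [NormedAddCommGroup E] [InnerProductSpace ℝ E]
    {S : Set E} {x : E} :
    x ∈ (Submodule.span ℝ S)ᗮ ↔ ∀ u ∈ S, ⟪u, x⟫ = 0 := by
  constructor
  · intro h u hu
    exact (Submodule.mem_orthogonal _ x).1 h u (Submodule.subset_span hu)
  · intro h
    rw [Submodule.mem_orthogonal]
    intro u hu
    induction hu using Submodule.span_induction with
    | mem u hu => exact h u hu
    | zero => simp
    | add u v _ _ hu hv => simp [inner_add_left, hu, hv]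
    | smul c u _ hu => simp [inner_smul_left, hu]

lemma orth0 : (threeHyperplanes 0)ᗮ = ℝ ∙ (EuclideanSpace.single 0 (1:ℝ)) := by
  ext x
  rw [show threeHyperplanes 0 = Submodule.span ℝ
      {EuclideanSpace.single 1 (1 : ℝ), EuclideanSpace.single 2 (1 : ℝ)} from rfl,
    mem_orth_span, Submodule.mem_span_singleton]
  constructor
  · intro h
    have h1 := h _ (Or.inl rfl)
    have h2 := h _ (Or.inr rfl)
    simp [EuclideanSpace.inner_single_left] at h1 h2
    refine ⟨x 0, ?_⟩
    ext i; fin_cases i <;> simp [EuclideanSpace.single_apply, h1, h2]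
  · rintro ⟨c, rfl⟩ u hu
    rcases hu with rfl | rfl <;>
      simp [EuclideanSpace.inner_single_left, EuclideanSpace.single_apply]

lemma orth1 : (threeHyperplanes 1)ᗮ = ℝ ∙ (EuclideanSpace.single 1 (1:ℝ)) := by
  ext x
  rw [show threeHyperplanes 1 = Submodule.span ℝ
      {EuclideanSpace.single 0 (1 : ℝ), EuclideanSpace.single 2 (1 : ℝ)} from rfl,
    mem_orth_span, Submodule.mem_span_singleton]
  constructor
  · intro h
    have h1 := h _ (Or.inl rfl)
    have h2 := h _ (Or.inr rfl)
    simp [EuclideanSpace.inner_single_left] at h1 h2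
    refine ⟨x 1, ?_⟩
    ext i; fin_cases i <;> simp [EuclideanSpace.single_apply, h1, h2]
  · rintro ⟨c, rfl⟩ u hu
    rcases hu with rfl | rfl <;>
      simp [EuclideanSpace.inner_single_left, EuclideanSpace.single_apply]

lemma orth2 : (threeHyperplanes 2)ᗮ =
    ℝ ∙ (EuclideanSpace.single 0 (1:ℝ) - EuclideanSpace.single 1 (1:ℝ)) := by
  have hs : (Real.sqrt 2)⁻¹ ≠ 0 := by positivity
  ext x
  rw [show threeHyperplanes 2 = Submodule.span ℝ
      {(Real.sqrt 2)⁻¹ • (EuclideanSpace.single 0 (1 : ℝ) + EuclideanSpace.single 1 (1 : ℝ)),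
       EuclideanSpace.single 2 (1 : ℝ)} from rfl,
    mem_orth_span, Submodule.mem_span_singleton]
  constructor
  · intro h
    have h1 := h _ (Or.inl rfl)
    have h2 := h _ (Or.inr rfl)
    rw [inner_smul_left, inner_add_left] at h1
    simp [EuclideanSpace.inner_single_left, hs] at h1 h2
    have h1' : x 1 = - x 0 := by linarith
    refine ⟨x 0, ?_⟩
    ext i
    fin_cases i <;> simp [EuclideanSpace.single_apply, h1', h2]
  · rintro ⟨c, rfl⟩ u hu
    rcases hu with rfl | rfl <;>
      simp [inner_smul_left, inner_add_left, inner_sub_right,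
        EuclideanSpace.inner_single_left, EuclideanSpace.inner_single_right,
        EuclideanSpace.single_apply]

lemma proj_congr {E : Type*} [NormedAddCommGroup E] [InnerProductSpace ℝ E]
    {K K' : Submodule ℝ E} [Submodule.HasOrthogonalProjection K] [Submodule.HasOrthogonalProjection K']
    (h : K = K') (z : E) :
    (Submodule.orthogonalProjectionOnto K z : E) = Submodule.orthogonalProjectionOnto K' z := by subst h; rfl

lemma norm_proj_hyperplane {E : Type*} [NormedAddCommGroup E] [InnerProductSpace ℝ E]
    [FiniteDimensional ℝ E] {W : Submodule ℝ E} {v : E}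
    (hv : Wᗮ = ℝ ∙ v) (z : E) :
    ‖(Submodule.orthogonalProjectionOnto W z : E)‖^2 = ‖z‖^2 - ⟪v, z⟫^2 / ‖v‖^2 := by
  have h := Submodule.norm_sq_eq_add_norm_sq_projection z W
  simp only [Submodule.coe_norm] at h
  rw [proj_congr hv z, ← Submodule.starProjection_apply (ℝ ∙ v), Submodule.starProjection_singleton] at h
  simp only [RCLike.ofReal_real_eq_id, id] at h
  rw [norm_smul, Real.norm_eq_abs, mul_pow, sq_abs] at h
  rcases eq_or_ne v 0 with rfl | hv0
  · simp at h ⊢; linarith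
  · have hnv : ‖v‖ ≠ 0 := norm_ne_zero_iff.2 hv0
    rw [h]
    field_simp
    ring

lemma key_alg (a x0 x1 y0 y1 : ℝ) (h1 : x0^2 = y0^2 + a) (h2 : x1^2 = y1^2 + a)
    (h3 : x0*x1 = y0*y1) : a = 0 := by
  have k1 : a * (a + y0^2 + y1^2) = 0 := by
    linear_combination (-x1^2)*h1 - (y0^2+a)*h2 + (x0*x1+y0*y1)*h3
  have k2 : a * (a - x0^2 - x1^2) = 0 := by
    linear_combination (y1^2)*h1 + (x0^2-a)*h2 - (x0*x1+y0*y1)*h3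
  nlinarith [k1, k2, sq_nonneg x0, sq_nonneg x1, sq_nonneg y0, sq_nonneg y1]

/-- The three hyperplanes do norm retrieval for `ℝ^3`, even though the normal vectors
`e₁, e₂, (e₁ - e₂)/√2` spanning their orthogonal complements are linearly dependent. -/
theorem three_hyperplanes_norm_retrieval :
    (∀ x y : EuclideanSpace ℝ (Fin 3),
      (∀ i, ‖(Submodule.orthogonalProjectionOnto (threeHyperplanes i) x : EuclideanSpace ℝ (Fin 3))‖ =
            ‖(Submodule.orthogonalProjectionOnto (threeHyperplanes i) y : EuclideanSpace ℝ (Fin 3))‖) →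
      ‖x‖ = ‖y‖) ∧
    ¬ LinearIndependent ℝ
      ![EuclideanSpace.single 0 (1 : ℝ),
        EuclideanSpace.single 1 (1 : ℝ),
        (Real.sqrt 2)⁻¹ • (EuclideanSpace.single 0 (1 : ℝ) - EuclideanSpace.single 1 (1 : ℝ))] := by
  constructor
  · intro x y h
    set v2 : EuclideanSpace ℝ (Fin 3) :=
      EuclideanSpace.single 0 (1:ℝ) - EuclideanSpace.single 1 (1:ℝ) with hv2def
    have hnorm0 : ‖(EuclideanSpace.single 0 (1:ℝ) : EuclideanSpace ℝ (Fin 3))‖ = 1 := by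
      simp [EuclideanSpace.norm_single]
    have hnorm1 : ‖(EuclideanSpace.single 1 (1:ℝ) : EuclideanSpace ℝ (Fin 3))‖ = 1 := by
      simp [EuclideanSpace.norm_single]
    have hnorm2 : ‖v2‖^2 = 2 := by
      rw [← real_inner_self_eq_norm_sq]
      simp [hv2def, inner_sub_left, inner_sub_right, EuclideanSpace.inner_single_left,
        EuclideanSpace.inner_single_right, EuclideanSpace.single_apply, -inner_self_eq_norm_sq_to_K]
      norm_num
    have hinner : ∀ z : EuclideanSpace ℝ (Fin 3), ⟪v2, z⟫ = z 0 - z 1 := by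
      intro z
      simp [hv2def, inner_sub_left, EuclideanSpace.inner_single_left]
    have e0x := norm_proj_hyperplane orth0 x
    have e0y := norm_proj_hyperplane orth0 y
    have e1x := norm_proj_hyperplane orth1 x
    have e1y := norm_proj_hyperplane orth1 y
    have e2x := norm_proj_hyperplane orth2 x
    have e2y := norm_proj_hyperplane orth2 y
    rw [hnorm0] at e0x e0y
    rw [hnorm1] at e1x e1y
    rw [← hv2def, hnorm2, hinner] at e2x e2y
    simp only [EuclideanSpace.inner_single_left, map_one, one_mul, one_pow, div_one] at e0x e0y e1x e1y
    have h0 := h 0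
    have h1 := h 1
    have h2 := h 2
    have q0 : ‖x‖^2 - (x 0)^2 = ‖y‖^2 - (y 0)^2 := by
      rw [← e0x, ← e0y, h0]
    have q1 : ‖x‖^2 - (x 1)^2 = ‖y‖^2 - (y 1)^2 := by
      rw [← e1x, ← e1y, h1]
    have q2 : ‖x‖^2 - (x 0 - x 1)^2/2 = ‖y‖^2 - (y 0 - y 1)^2/2 := by
      rw [← e2x, ← e2y, h2]
    have hk : ‖x‖^2 - ‖y‖^2 = 0 := by
      refine key_alg _ (x 0) (x 1) (y 0) (y 1) (by linarith) (by linarith) ?_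
      linear_combination q2 - q0/2 - q1/2
    have hx2 : ‖x‖^2 = ‖y‖^2 := by linarith
    calc ‖x‖ = Real.sqrt (‖x‖^2) := (Real.sqrt_sq (norm_nonneg x)).symm
      _ = Real.sqrt (‖y‖^2) := by rw [hx2]
      _ = ‖y‖ := Real.sqrt_sq (norm_nonneg y)
  · rw [Fintype.not_linearIndependent_iff]
    refine ⟨![1, -1, -Real.sqrt 2], ?_, 0, by norm_num⟩
    have hs : Real.sqrt 2 ≠ 0 := by positivity
    rw [Fin.sum_univ_three]
    simp only [Matrix.cons_val_zero, Matrix.cons_val_one, Matrix.head_cons,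
      Matrix.cons_val_two, Matrix.tail_cons, smul_smul]
    rw [neg_mul, mul_inv_cancel₀ hs]
    module
end

section
/- Let 0 < ε < 1, let X and Y be subspaces of ℝ^n, let P be the orthogonal projection onto X, and let T : ℝ^n → ℝ^n be a linear map carrying X onto Y (T(X) = Y) and satisfying ‖u − Tu‖ ≤ ε‖u‖ for all u ∈ X. Define S x = T(Px) + (x − Px) (which is invertible) and Q = S ∘ P ∘ S⁻¹. Then: (3) Q is idempotent (Q∘Q = Q) and its range equals Y; and (4) ‖(P − Q)x‖ ≤ ((1+ε²)/(1−ε))‖x‖ for all x ∈ ℝ^n. -/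
open RealInnerProductSpace

/-- Let `P` be the orthogonal projection onto a subspace `X` of `ℝ^n`, `T` a linear map
carrying `X` onto `Y` with `‖u - Tu‖ ≤ ε‖u‖` on `X`, `0 < ε < 1`, `S x = T(Px) + (x - Px)`
(which is invertible, with inverse `Sinv`), and `Q = S ∘ P ∘ S⁻¹`.  Then (3) `Q` is
idempotent with range `Y`, and (4) `‖(P - Q)x‖ ≤ ((1+ε²)/(1-ε))‖x‖` for all `x`. -/
theorem conjugated_projection_properties
    {n : ℕ} (ε : ℝ) (hε0 : 0 < ε) (hε1 : ε < 1)
    (X Y : Submodule ℝ (EuclideanSpace ℝ (Fin n)))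
    (T : EuclideanSpace ℝ (Fin n) →ₗ[ℝ] EuclideanSpace ℝ (Fin n))
    (hTXY : X.map T = Y)
    (hT : ∀ u ∈ X, ‖u - T u‖ ≤ ε * ‖u‖)
    (P : EuclideanSpace ℝ (Fin n) →ₗ[ℝ] EuclideanSpace ℝ (Fin n))
    (hP : ∀ x, P x = (X.orthogonalProjectionOnto x : EuclideanSpace ℝ (Fin n)))
    (S : EuclideanSpace ℝ (Fin n) →ₗ[ℝ] EuclideanSpace ℝ (Fin n))
    (hS : ∀ x, S x = T (P x) + (x - P x))
    (Sinv : EuclideanSpace ℝ (Fin n) →ₗ[ℝ] EuclideanSpace ℝ (Fin n))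
    (hSinv₁ : ∀ x, Sinv (S x) = x) (hSinv₂ : ∀ x, S (Sinv x) = x) :
    (S ∘ₗ P ∘ₗ Sinv) ∘ₗ (S ∘ₗ P ∘ₗ Sinv) = S ∘ₗ P ∘ₗ Sinv ∧
    LinearMap.range (S ∘ₗ P ∘ₗ Sinv) = Y ∧
    (∀ x, ‖P x - (S ∘ₗ P ∘ₗ Sinv) x‖ ≤ ((1 + ε ^ 2) / (1 - ε)) * ‖x‖) := by
  have hPmem : ∀ x, P x ∈ X := fun x => by rw [hP]; exact (Submodule.orthogonalProjectionOnto X x).2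
  have hPid : ∀ u ∈ X, P u = u := fun u hu => by
    rw [hP]; exact Submodule.starProjection_eq_self_iff.2 hu
  have hPP : ∀ x, P (P x) = P x := fun x => hPid _ (hPmem x)
  have hSX : ∀ u ∈ X, S u = T u := fun u hu => by
    rw [hS, hPid u hu]; abel
  have hPnorm : ∀ x, ‖P x‖ ≤ ‖x‖ := fun x => by
    rw [hP]
    calc ‖(Submodule.orthogonalProjectionOnto X x : EuclideanSpace ℝ (Fin n))‖
        ≤ ‖Submodule.orthogonalProjectionOnto X‖ * ‖x‖ := (Submodule.orthogonalProjectionOnto X).le_opNorm x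
      _ ≤ 1 * ‖x‖ := by
          apply mul_le_mul_of_nonneg_right (Submodule.orthogonalProjectionOnto_norm_le X) (norm_nonneg x)
      _ = ‖x‖ := one_mul _
  have hPorth : ∀ x, ‖x - P x‖ ≤ ‖x‖ := fun x => by
    rw [hP, ← X.starProjection_apply, ← Submodule.starProjection_orthogonal_val, Submodule.starProjection_apply]
    calc ‖(Submodule.orthogonalProjectionOnto Xᗮ x : EuclideanSpace ℝ (Fin n))‖
        ≤ ‖Submodule.orthogonalProjectionOnto Xᗮ‖ * ‖x‖ := (Submodule.orthogonalProjectionOnto Xᗮ).le_opNorm x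
      _ ≤ 1 * ‖x‖ := by
          apply mul_le_mul_of_nonneg_right (Submodule.orthogonalProjectionOnto_norm_le Xᗮ) (norm_nonneg x)
      _ = ‖x‖ := one_mul _
  refine ⟨?_, ?_, ?_⟩
  · ext x
    simp only [LinearMap.comp_apply, hSinv₁, hPP]
  · ext y
    constructor
    · rintro ⟨x, rfl⟩
      simp only [LinearMap.comp_apply]
      rw [hSX _ (hPmem (Sinv x))]
      rw [← hTXY]
      exact ⟨P (Sinv x), hPmem _, rfl⟩
    · intro hy
      rw [← hTXY] at hy
      obtain ⟨u, hu, rfl⟩ := hy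
      refine ⟨S u, ?_⟩
      simp only [LinearMap.comp_apply, hSinv₁]
      rw [hPid u hu, hSX u hu]
  · intro x
    set y := Sinv x with hy
    have hxy : x = S y := (hSinv₂ x).symm
    -- ‖y‖ ≤ ‖x‖/(1-ε)
    have hyS : y - S y = P y - T (P y) := by rw [hS]; abel
    have hTe : ‖P y - T (P y)‖ ≤ ε * ‖P y‖ := hT _ (hPmem y)
    have hSlow : (1 - ε) * ‖y‖ ≤ ‖x‖ := by
      have h1 : ‖y‖ - ‖y - S y‖ ≤ ‖S y‖ := by
        have := norm_sub_norm_le y (y - S y)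
        simpa using this
      have h2 : ‖y - S y‖ ≤ ε * ‖y‖ := by
        rw [hyS]
        exact hTe.trans (by nlinarith [hPnorm y, hε0.le])
      rw [hxy]; nlinarith
    -- Px - Qx = (P - 1)(T(Py)) and this equals -(1-P)(T(Py) - Py)
    have key : P x - (S ∘ₗ P ∘ₗ Sinv) x
        = (P (T (P y)) - P (P y)) - (T (P y) - P y) := by
      simp only [LinearMap.comp_apply, ← hy]
      rw [hSX _ (hPmem y)]
      conv_lhs => rw [hxy, hS]
      have : P (T (P y) + (y - P y)) = P (T (P y)) + P y - P (P y) := by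
        simp only [map_add, map_sub]; abel
      rw [this, hPP]
      abel
    have hbound : ‖P x - (S ∘ₗ P ∘ₗ Sinv) x‖ ≤ ε * ‖y‖ := by
      rw [key]
      set v := T (P y) - P y with hv
      have hv2 : P v = P (T (P y)) - P (P y) := by rw [hv, map_sub]
      have := hPorth v
      rw [hv2] at this
      calc ‖(P (T (P y)) - P (P y)) - v‖ = ‖v - (P (T (P y)) - P (P y))‖ := norm_sub_rev _ _
        _ ≤ ‖v‖ := this
        _ = ‖P y - T (P y)‖ := by rw [hv, norm_sub_rev]
        _ ≤ ε * ‖P y‖ := hTe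
        _ ≤ ε * ‖y‖ := by nlinarith [hPnorm y, hε0.le]
    have h1ε : 0 < 1 - ε := by linarith
    have hyx : ‖y‖ ≤ ‖x‖ / (1 - ε) := by
      rw [le_div_iff₀ h1ε]; nlinarith
    calc ‖P x - (S ∘ₗ P ∘ₗ Sinv) x‖ ≤ ε * ‖y‖ := hbound
      _ ≤ ε * (‖x‖ / (1 - ε)) := by nlinarith [hε0.le]
      _ ≤ ((1 + ε ^ 2) / (1 - ε)) * ‖x‖ := by
          rw [mul_comm ε, div_mul_eq_mul_div, div_mul_eq_mul_div,
            div_le_div_iff₀ h1ε h1ε]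
          nlinarith [mul_nonneg (mul_nonneg (norm_nonneg x) (sq_nonneg ε)) h1ε.le,
            mul_nonneg (mul_nonneg (norm_nonneg x) h1ε.le) h1ε.le]
end

section
/- For every δ > 0 there exists ε > 0 with the following property: whenever X and Y are subspaces of ℝ^n, T : ℝ^n → ℝ^n is a linear map carrying X bijectively onto Y with ‖u − Tu‖ ≤ ε‖u‖ for all u ∈ X, and x ∈ ℝ^n satisfies ‖x‖ = 1 and x ⊥ X, then there exists y ∈ ℝ^n with ‖y‖ = 1, y ⊥ Y, and ‖x − y‖ ≤ δ. -/
open RealInnerProductSpace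

/-- For every `δ > 0` there is `ε > 0` such that whenever `T` carries a subspace `X` of
`ℝ^n` bijectively onto a subspace `Y` with `‖u - Tu‖ ≤ ε‖u‖` on `X`, every unit vector
orthogonal to `X` is within `δ` of a unit vector orthogonal to `Y`. -/
theorem perturbed_orthogonal_unit_vector
    {n : ℕ} :
    ∀ δ > (0 : ℝ), ∃ ε > (0 : ℝ),
      ∀ (X Y : Submodule ℝ (EuclideanSpace ℝ (Fin n)))
        (T : EuclideanSpace ℝ (Fin n) →ₗ[ℝ] EuclideanSpace ℝ (Fin n)),
        Set.BijOn T (X : Set (EuclideanSpace ℝ (Fin n))) (Y : Set (EuclideanSpace ℝ (Fin n))) →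
        (∀ u ∈ X, ‖u - T u‖ ≤ ε * ‖u‖) →
        ∀ x : EuclideanSpace ℝ (Fin n), ‖x‖ = 1 → (∀ u ∈ X, ⟪x, u⟫ = 0) →
          ∃ y : EuclideanSpace ℝ (Fin n), ‖y‖ = 1 ∧ (∀ v ∈ Y, ⟪y, v⟫ = 0) ∧ ‖x - y‖ ≤ δ := by
  intro δ hδ
  refine ⟨min (δ/4) (1/3), lt_min (by linarith) (by norm_num), ?_⟩
  set ε := min (δ/4) (1/3) with hεdef
  have hε0 : 0 < ε := lt_min (by linarith) (by norm_num)
  have hε3 : ε ≤ 1/3 := min_le_right _ _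
  have hεδ : ε ≤ δ/4 := min_le_left _ _
  intro X Y T hbij hT x hx hxX
  set P : EuclideanSpace ℝ (Fin n) := (Y.orthogonalProjectionOnto x : EuclideanSpace ℝ (Fin n))
    with hPdef
  have hPY : P ∈ Y := (Y.orthogonalProjectionOnto x).2
  set z : EuclideanSpace ℝ (Fin n) := x - P with hzdef
  have hzY : z ∈ Yᗮ := Y.sub_starProjection_mem_orthogonal x
  have hzP : ⟪P, z⟫ = 0 := (Submodule.mem_orthogonal Y z).mp hzY P hPY
  have hzP' : ⟪z, P⟫ = 0 := by rw [real_inner_comm]; exact hzP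
  -- bound on the projection
  have hPbound : ‖P‖ ≤ (3/2) * ε := by
    rcases eq_or_ne P 0 with h0 | h0
    · rw [h0, norm_zero]; positivity
    · obtain ⟨u, huX, hTu⟩ := hbij.surjOn hPY
      have hTn : ‖u - T u‖ ≤ ε * ‖u‖ := hT u huX
      have hu1 : ‖u‖ ≤ ‖u - T u‖ + ‖T u‖ := by
        calc ‖u‖ = ‖(u - T u) + T u‖ := by rw [sub_add_cancel]
        _ ≤ ‖u - T u‖ + ‖T u‖ := norm_add_le _ _
      have hu2 : ‖u‖ ≤ (3/2) * ‖P‖ := by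
        rw [hTu] at hu1 hTn
        nlinarith [norm_nonneg u, norm_nonneg P,
          mul_le_mul_of_nonneg_right hε3 (norm_nonneg u)]
      have hinner : ⟪x, P⟫ = ‖P‖ ^ 2 := by
        have hxzP : x = z + P := by rw [hzdef]; abel
        rw [hxzP, inner_add_left, hzP', real_inner_self_eq_norm_sq, zero_add]
      have hinner2 : ⟪x, P⟫ ≤ ε * ‖u‖ := by
        have hxu : ⟪x, u⟫ = 0 := hxX u huX
        have : ⟪x, P⟫ = ⟪x, T u - u⟫ := by
          rw [inner_sub_right, hxu, hTu, sub_zero]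
        rw [this]
        calc ⟪x, T u - u⟫ ≤ ‖x‖ * ‖T u - u‖ := real_inner_le_norm _ _
        _ = ‖u - T u‖ := by rw [hx, one_mul, norm_sub_rev]
        _ ≤ ε * ‖u‖ := hTn
      have hPpos : 0 < ‖P‖ := norm_pos_iff.mpr h0
      nlinarith [hinner ▸ hinner2]
  have hz_ge : 1 - ‖P‖ ≤ ‖z‖ := by
    have h := norm_sub_norm_le x P
    rw [hx] at h; exact h
  have hz_le : ‖z‖ ≤ 1 := by
    have hxzP : x = z + P := by rw [hzdef]; abel
    have hx2 : ‖x‖ ^ 2 = ‖z‖ ^ 2 + 2 * ⟪z, P⟫ + ‖P‖ ^ 2 := by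
      rw [hxzP]; exact norm_add_sq_real z P
    rw [hx, hzP'] at hx2
    nlinarith [norm_nonneg P, norm_nonneg z]
  have hzpos : 0 < ‖z‖ := by
    have : ‖P‖ ≤ 1/2 := by linarith
    linarith
  refine ⟨‖z‖⁻¹ • z, ?_, ?_, ?_⟩
  · rw [norm_smul, norm_inv, norm_norm, inv_mul_cancel₀ hzpos.ne']
  · intro v hv
    have h := (Submodule.mem_orthogonal Y z).mp hzY v hv
    rw [real_inner_smul_left, real_inner_comm, h, mul_zero]
  · have h1 : x - ‖z‖⁻¹ • z = (x - z) + (z - ‖z‖⁻¹ • z) := by abel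
    have h2 : ‖z - ‖z‖⁻¹ • z‖ = 1 - ‖z‖ := by
      have hzz : z - ‖z‖⁻¹ • z = (1 - ‖z‖⁻¹) • z := by
        rw [sub_smul, one_smul]
      rw [hzz, norm_smul, Real.norm_eq_abs,
        abs_of_nonpos (by rw [sub_nonpos]; exact (one_le_inv_iff₀.mpr ⟨hzpos, hz_le⟩)),
        neg_sub, sub_mul, inv_mul_cancel₀ hzpos.ne', one_mul]
    have h3 : ‖x - z‖ = ‖P‖ := by rw [hzdef]; simp
    calc ‖x - ‖z‖⁻¹ • z‖ ≤ ‖x - z‖ + ‖z - ‖z‖⁻¹ • z‖ := by rw [h1]; exact norm_add_le _ _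
    _ = ‖P‖ + (1 - ‖z‖) := by rw [h2, h3]
    _ ≤ ‖P‖ + ‖P‖ := by linarith
    _ ≤ δ := by linarith
end

section
/- Let H be an infinite-dimensional separable real Hilbert space and let {φ_i}_{i=1}^∞ be a Riesz basis for H that does norm retrieval. Then the vectors {φ_i}_{i=1}^∞ are pairwise orthogonal: ⟨φ_i, φ_j⟩ = 0 for all i ≠ j. -/
open RealInnerProductSpace

/-- A Riesz basis of an infinite-dimensional separable real Hilbert space which does norm
retrieval must be an orthogonal sequence. -/
theorem riesz_basis_norm_retrieval_orthogonal
    {H : Type*} [NormedAddCommGroup H] [InnerProductSpace ℝ H] [CompleteSpace H]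
    [TopologicalSpace.SeparableSpace H]
    (hinf : ¬ FiniteDimensional ℝ H)
    (φ : ℕ → H) (A B : ℝ) (hA : 0 < A) (hAB : A ≤ B)
    (hdense : Dense (Submodule.span ℝ (Set.range φ) : Set H))
    (hRiesz : ∀ (s : Finset ℕ) (c : ℕ → ℝ),
      A * ∑ i ∈ s, (c i) ^ 2 ≤ ‖∑ i ∈ s, c i • φ i‖ ^ 2 ∧
      ‖∑ i ∈ s, c i • φ i‖ ^ 2 ≤ B * ∑ i ∈ s, (c i) ^ 2)
    (hNR : ∀ x y : H, (∀ i, |⟪x, φ i⟫| = |⟪y, φ i⟫|) → ‖x‖ = ‖y‖) :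
    ∀ i j, i ≠ j → ⟪φ i, φ j⟫ = 0 := by
  intro i j hij
  classical
  -- the span of the other basis vectors and its closure
  set ψ : {k : ℕ // k ≠ i} → H := fun k => φ k.1 with hψ
  set V : Submodule ℝ H := Submodule.span ℝ (Set.range ψ) with hV
  set K : Submodule ℝ H := V.topologicalClosure with hK
  haveI : CompleteSpace K := (V.isClosed_topologicalClosure).completeSpace_coe
  -- `φ i` is not in the closed span of the others
  have hnotin : φ i ∉ K := by
    intro hmem
    have h1 : φ i ∈ closure (V : Set H) := by
      rw [← Submodule.topologicalClosure_coe]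
      exact hmem
    obtain ⟨w, hwV, hwdist⟩ := Metric.mem_closure_iff.mp h1 (Real.sqrt A)
      (Real.sqrt_pos.mpr hA)
    obtain ⟨c, hc⟩ := Finsupp.mem_span_range_iff_exists_finsupp.mp hwV
    set t : Finset ℕ := c.support.image Subtype.val with ht
    have hit : i ∉ t := by
      simp only [ht, Finset.mem_image]
      rintro ⟨x, -, hx⟩
      exact x.2 hx
    set d : ℕ → ℝ := fun k => if h : k = i then 1 else -(c ⟨k, h⟩) with hd
    have hdi : d i = 1 := by simp [hd]
    have hsumt : ∑ k ∈ t, d k • φ k = -w := by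
      rw [ht, Finset.sum_image (by intro x _ y _ h; exact Subtype.ext h)]
      rw [← hc, Finsupp.sum]
      rw [← Finset.sum_neg_distrib]
      refine Finset.sum_congr rfl ?_
      intro x hx
      have : d x.1 = -(c x) := by
        simp only [hd]
        rw [dif_neg x.2]
      rw [this, hψ, neg_smul]
    have hsum : ∑ k ∈ insert i t, d k • φ k = φ i - w := by
      rw [Finset.sum_insert hit, hsumt, hdi, one_smul, sub_eq_add_neg]
    have hd2 : (1 : ℝ) ≤ ∑ k ∈ insert i t, d k ^ 2 := by
      have h1 : ∑ k ∈ insert i t, d k ^ 2 = 1 + ∑ k ∈ t, d k ^ 2 := by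
        rw [Finset.sum_insert hit, hdi]; norm_num
      have h2 : (0 : ℝ) ≤ ∑ k ∈ t, d k ^ 2 :=
        Finset.sum_nonneg fun _ _ => sq_nonneg _
      linarith
    have hlow := (hRiesz (insert i t) d).1
    rw [hsum] at hlow
    have hdist : ‖φ i - w‖ < Real.sqrt A := by rwa [dist_eq_norm] at hwdist
    have hsq : ‖φ i - w‖ ^ 2 < A := by
      have := pow_lt_pow_left₀ hdist (norm_nonneg _) (n := 2) two_ne_zero
      rwa [Real.sq_sqrt hA.le] at this
    nlinarith
  -- the orthogonal complement vector
  set u : H := φ i - (K.orthogonalProjectionOnto (φ i) : H) with hu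
  have huK : ∀ w ∈ K, ⟪u, w⟫ = 0 := by
    intro w hw
    have := Submodule.sub_starProjection_mem_orthogonal (K := K) (φ i)
    rw [real_inner_comm]
    exact (Submodule.mem_orthogonal K u).mp this w hw
  have hune : u ≠ 0 := by
    intro h0
    apply hnotin
    have : φ i = (K.orthogonalProjectionOnto (φ i) : H) := by
      rwa [hu, sub_eq_zero] at h0
    rw [this]
    exact (K.orthogonalProjectionOnto (φ i)).2
  have huφk : ∀ k, k ≠ i → ⟪u, φ k⟫ = 0 := by
    intro k hk
    apply huK
    apply Submodule.le_topologicalClosure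
    exact Submodule.subset_span ⟨⟨k, hk⟩, rfl⟩
  have huφi : ⟪u, φ i⟫ = ‖u‖ ^ 2 := by
    have hp : ⟪u, (K.orthogonalProjectionOnto (φ i) : H)⟫ = 0 :=
      huK _ (K.orthogonalProjectionOnto (φ i)).2
    have : ⟪u, φ i⟫ = ⟪u, u⟫ + ⟪u, (K.orthogonalProjectionOnto (φ i) : H)⟫ := by
      rw [← inner_add_right]
      congr 1
      rw [hu]; abel
    rw [this, hp, real_inner_self_eq_norm_sq, add_zero]
  clear hu
  clear_value u
  -- norm bound on φ i
  have hφi : A ≤ ‖φ i‖ ^ 2 := by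
    have := (hRiesz {i} (fun k => if k = i then 1 else 0)).1
    simpa using this
  have hφi_ne : ‖φ i‖ ^ 2 ≠ 0 := (lt_of_lt_of_le hA hφi).ne'
  -- the test vector y
  set c : ℝ := ⟪φ j, φ i⟫ / ‖φ i‖ ^ 2 with hc
  set y : H := φ j - c • φ i with hy
  have hyi : ⟪y, φ i⟫ = 0 := by
    rw [hy, inner_sub_left, real_inner_smul_left, real_inner_self_eq_norm_sq, hc,
      div_mul_cancel₀ _ hφi_ne, sub_self]
  have huy : ⟪u, y⟫ = -(c * ‖u‖ ^ 2) := by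
    rw [hy, inner_sub_right, real_inner_smul_right, huφk j (Ne.symm hij),
      huφi, zero_sub]
  clear hy
  clear_value y c
  -- apply norm retrieval to u + y and u - y
  have hkey : ∀ k, |⟪u + y, φ k⟫| = |⟪u - y, φ k⟫| := by
    intro k
    rw [inner_add_left, inner_sub_left]
    by_cases hk : k = i
    · subst hk
      have : ⟪y, φ k⟫ = 0 := hyi
      rw [this, add_zero, sub_zero]
    · rw [huφk k hk, zero_add, zero_sub, abs_neg]
  have hnorm := hNR (u + y) (u - y) hkey
  have hinner : ⟪u, y⟫ = 0 := by
    have h1 : ‖u + y‖ ^ 2 = ‖u - y‖ ^ 2 := by rw [hnorm]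
    rw [norm_add_sq_real, norm_sub_sq_real] at h1
    linarith
  -- conclude
  have hcz : c * ‖u‖ ^ 2 = 0 := by
    rw [huy] at hinner
    linarith
  have hu2 : ‖u‖ ^ 2 ≠ 0 := by
    simpa using pow_ne_zero 2 (norm_ne_zero_iff.mpr hune)
  have hc0 : c = 0 := by
    rcases mul_eq_zero.mp hcz with h | h
    · exact h
    · exact absurd h hu2
  have : ⟪φ j, φ i⟫ = 0 := by
    rw [hc, div_eq_zero_iff] at hc0
    rcases hc0 with h | h
    · exact h
    · exact absurd h hφi_ne
  rw [real_inner_comm]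
  exact this
end

section
/- Let H be an infinite-dimensional separable real Hilbert space and let {φ_i}_{i=1}^∞ be a Riesz basis for H that is not orthogonal (there exist i ≠ j with ⟨φ_i, φ_j⟩ ≠ 0). Then there exists δ > 0 such that no family {ψ_i}_{i=1}^∞ in H with ∑_{i=1}^∞ ‖φ_i − ψ_i‖ ≤ δ does norm retrieval. Consequently, the families of vectors which do norm retrieval in H are not dense in the countable families of vectors in H. -/
open RealInnerProductSpace

/-- A family of vectors in a real inner product space does norm retrieval if equality of
all the absolute frame coefficients of `x` and `y` forces `‖x‖ = ‖y‖`. -/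
def DoesNormRetrieval {H : Type*} [NormedAddCommGroup H] [InnerProductSpace ℝ H]
    {ι : Type*} (f : ι → H) : Prop :=
  ∀ x y : H, (∀ i, |⟪x, f i⟫| = |⟪y, f i⟫|) → ‖x‖ = ‖y‖

/-- If `{φ i}` is a non-orthogonal Riesz basis of an infinite-dimensional separable real
Hilbert space, then no family `{ψ i}` sufficiently close to `{φ i}` (in the sense
`∑ ‖φ i - ψ i‖ ≤ δ`) does norm retrieval.  Consequently, the families doing norm
retrieval are not dense in the countable families of vectors. -/
theorem norm_retrieval_not_dense
    {H : Type*} [NormedAddCommGroup H] [InnerProductSpace ℝ H] [CompleteSpace H]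
    [TopologicalSpace.SeparableSpace H]
    (hinf : ¬ FiniteDimensional ℝ H)
    (φ : ℕ → H) (A B : ℝ) (hA : 0 < A) (hAB : A ≤ B)
    (hdense : Dense (Submodule.span ℝ (Set.range φ) : Set H))
    (hRiesz : ∀ (s : Finset ℕ) (c : ℕ → ℝ),
      A * ∑ i ∈ s, (c i) ^ 2 ≤ ‖∑ i ∈ s, c i • φ i‖ ^ 2 ∧
      ‖∑ i ∈ s, c i • φ i‖ ^ 2 ≤ B * ∑ i ∈ s, (c i) ^ 2)
    (hnotorth : ∃ i j, i ≠ j ∧ ⟪φ i, φ j⟫ ≠ 0) :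
    ∃ δ > (0 : ℝ), ∀ ψ : ℕ → H,
      Summable (fun i => ‖φ i - ψ i‖) → (∑' i, ‖φ i - ψ i‖) ≤ δ →
      ¬ DoesNormRetrieval ψ := by
  obtain ⟨i₀, j₀, hij, hc⟩ := hnotorth
  set c : ℝ := ⟪φ i₀, φ j₀⟫ with hcdef
  have hsqA : (0:ℝ) < Real.sqrt A := Real.sqrt_pos.mpr hA
  have hsqB : (0:ℝ) ≤ Real.sqrt B := Real.sqrt_nonneg B
  have habs : (0:ℝ) < |c| := abs_pos.mpr hc
  set δ : ℝ := min (Real.sqrt A / 2) (|c| / (2 * Real.sqrt B + Real.sqrt A / 2 + 1))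
    with hδdef
  have hδpos : 0 < δ := by
    apply lt_min (by positivity)
    positivity
  have hδA : δ ≤ Real.sqrt A / 2 := min_le_left _ _
  refine ⟨δ, hδpos, ?_⟩
  intro ψ hsum hle hNR
  -- basic bounds
  have hBk : ∀ k, ‖φ k‖ ≤ Real.sqrt B := by
    intro k
    have h := (hRiesz {k} (fun _ => (1:ℝ))).2
    simp at h
    have hs := Real.sq_sqrt (le_trans hA.le hAB : (0:ℝ) ≤ B)
    nlinarith [norm_nonneg (φ k), Real.sqrt_nonneg B]
  have hdk : ∀ k, ‖φ k - ψ k‖ ≤ δ := by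
    intro k
    exact le_trans (hsum.le_tsum k (fun j _ => norm_nonneg _)) hle
  -- the perturbed inner product is still nonzero
  have hψj : ‖ψ j₀‖ ≤ Real.sqrt B + δ := by
    have := hdk j₀
    have h2 := hBk j₀
    calc ‖ψ j₀‖ = ‖φ j₀ - (φ j₀ - ψ j₀)‖ := by rw [sub_sub_cancel]
      _ ≤ ‖φ j₀‖ + ‖φ j₀ - ψ j₀‖ := norm_sub_le _ _
      _ ≤ Real.sqrt B + δ := add_le_add h2 this
  have hpert : |⟪ψ i₀, ψ j₀⟫ - c| ≤ δ * (2 * Real.sqrt B + δ) := by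
    have hdecomp : ⟪ψ i₀, ψ j₀⟫ - c
        = ⟪ψ i₀ - φ i₀, ψ j₀⟫ + ⟪φ i₀, ψ j₀ - φ j₀⟫ := by
      rw [hcdef, inner_sub_left, inner_sub_right]; ring
    rw [hdecomp]
    have h1 : |⟪ψ i₀ - φ i₀, ψ j₀⟫| ≤ δ * (Real.sqrt B + δ) := by
      refine le_trans (abs_real_inner_le_norm _ _) ?_
      have : ‖ψ i₀ - φ i₀‖ ≤ δ := by rw [norm_sub_rev]; exact hdk i₀
      exact mul_le_mul this hψj (norm_nonneg _) hδpos.le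
    have h2 : |⟪φ i₀, ψ j₀ - φ j₀⟫| ≤ Real.sqrt B * δ := by
      refine le_trans (abs_real_inner_le_norm _ _) ?_
      have : ‖ψ j₀ - φ j₀‖ ≤ δ := by rw [norm_sub_rev]; exact hdk j₀
      exact mul_le_mul (hBk i₀) this (norm_nonneg _) hsqB
    calc |⟪ψ i₀ - φ i₀, ψ j₀⟫ + ⟪φ i₀, ψ j₀ - φ j₀⟫|
        ≤ |⟪ψ i₀ - φ i₀, ψ j₀⟫| + |⟪φ i₀, ψ j₀ - φ j₀⟫| := abs_add_le _ _
      _ ≤ δ * (Real.sqrt B + δ) + Real.sqrt B * δ := add_le_add h1 h2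
      _ = δ * (2 * Real.sqrt B + δ) := by ring
  have hc' : ⟪ψ i₀, ψ j₀⟫ ≠ 0 := by
    intro h0
    rw [h0, zero_sub, abs_neg] at hpert
    have hδc : δ ≤ |c| / (2 * Real.sqrt B + Real.sqrt A / 2 + 1) := min_le_right _ _
    have hden : (0:ℝ) < 2 * Real.sqrt B + Real.sqrt A / 2 + 1 := by positivity
    have : δ * (2 * Real.sqrt B + δ) < |c| := by
      have h1 : δ * (2 * Real.sqrt B + δ) ≤ δ * (2 * Real.sqrt B + Real.sqrt A / 2) := by
        apply mul_le_mul_of_nonneg_left (by linarith) hδpos.le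
      have h2 : δ * (2 * Real.sqrt B + Real.sqrt A / 2) < δ * (2 * Real.sqrt B + Real.sqrt A / 2 + 1) :=
        by nlinarith
      have h3 : δ * (2 * Real.sqrt B + Real.sqrt A / 2 + 1) ≤ |c| := by
        rw [le_div_iff₀ hden] at hδc
        linarith
      linarith
    linarith
  have hψi0 : ψ i₀ ≠ 0 := by
    intro h; apply hc'; rw [h, inner_zero_left]
  -- the closed span of the other vectors
  set V : Submodule ℝ H :=
    (Submodule.span ℝ (ψ '' {m | m ≠ i₀})).topologicalClosure with hVdef
  haveI : CompleteSpace V := (Submodule.isClosed_topologicalClosure _).completeSpace_coe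
  have hmemV : ∀ m, m ≠ i₀ → ψ m ∈ V := by
    intro m hm
    exact Submodule.le_topologicalClosure _
      (Submodule.subset_span ⟨m, hm, rfl⟩)
  set p : H := ψ i₀ - (Submodule.orthogonalProjection V (ψ i₀) : H) with hpdef
  have hpV : ∀ u ∈ V, ⟪p, u⟫ = 0 := fun u hu =>
    Submodule.starProjection_inner_eq_zero (K := V) (ψ i₀) u hu
  have hpψm : ∀ m, m ≠ i₀ → ⟪p, ψ m⟫ = 0 := fun m hm => hpV _ (hmemV m hm)
  -- lower bound on the distance from ψ i₀ to V
  set r : ℝ := Real.sqrt A - Real.sqrt 2 * δ with hrdef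
  have hrpos : 0 < r := by
    have h2 : Real.sqrt 2 * δ ≤ Real.sqrt 2 * (Real.sqrt A / 2) :=
      mul_le_mul_of_nonneg_left hδA (Real.sqrt_nonneg 2)
    have hs2 : Real.sqrt 2 < 2 := by
      nlinarith [Real.sq_sqrt (by norm_num : (0:ℝ) ≤ 2), Real.sqrt_nonneg 2]
    nlinarith
  have hlow : ∀ v ∈ Submodule.span ℝ (ψ '' {m | m ≠ i₀}), r ≤ ‖ψ i₀ - v‖ := by
    intro v hv
    rw [Finsupp.mem_span_image_iff_linearCombination] at hv
    obtain ⟨l, hlsupp, rfl⟩ := hv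
    rw [Finsupp.mem_supported] at hlsupp
    have hi₀ : i₀ ∉ l.support := fun h => (hlsupp h) rfl
    set s : Finset ℕ := l.support with hsdef
    set t2 : ℝ := ∑ m ∈ s, (l m) ^ 2 with ht2def
    have ht2 : 0 ≤ t2 := Finset.sum_nonneg fun _ _ => sq_nonneg _
    have hcomb : (Finsupp.linearCombination ℝ ψ) l = ∑ m ∈ s, l m • ψ m :=
      Finsupp.linearCombination_apply_of_mem_supported ℝ (Finset.Subset.refl _)
    -- Riesz lower bound for φ
    have hAbound : A * (1 + t2) ≤ ‖φ i₀ - ∑ m ∈ s, l m • φ m‖ ^ 2 := by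
      have h := (hRiesz (insert i₀ s) (fun m => if m = i₀ then 1 else -(l m))).1
      rw [Finset.sum_insert hi₀, Finset.sum_insert hi₀] at h
      simp only [if_pos rfl] at h
      have hsum1 : ∑ m ∈ s, (if m = i₀ then (1:ℝ) else -(l m)) • φ m
          = -∑ m ∈ s, l m • φ m := by
        rw [← Finset.sum_neg_distrib]
        apply Finset.sum_congr rfl
        intro m hm
        rw [if_neg (show m ≠ i₀ by rintro rfl; exact hi₀ hm), neg_smul]
      have hsum2 : ∑ m ∈ s, (if m = i₀ then (1:ℝ) else -(l m)) ^ 2 = t2 := by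
        apply Finset.sum_congr rfl
        intro m hm
        rw [if_neg (show m ≠ i₀ by rintro rfl; exact hi₀ hm)]; ring
      rw [hsum1, hsum2] at h
      calc A * (1 + t2) = A * ((1:ℝ)^2 + t2) := by norm_num
        _ ≤ ‖(1:ℝ) • φ i₀ + -∑ m ∈ s, l m • φ m‖ ^ 2 := h
        _ = ‖φ i₀ - ∑ m ∈ s, l m • φ m‖ ^ 2 := by rw [one_smul, ← sub_eq_add_neg]
    -- bound |l m| by sqrt t2
    have hlm : ∀ m ∈ s, |l m| ≤ Real.sqrt t2 := by
      intro m hm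
      have : (l m)^2 ≤ t2 :=
        Finset.single_le_sum (f := fun i => (l i)^2) (fun i _ => sq_nonneg (l i)) hm
      calc |l m| = Real.sqrt ((l m)^2) := (Real.sqrt_sq_eq_abs _).symm
        _ ≤ Real.sqrt t2 := Real.sqrt_le_sqrt this
    -- error bound
    have herr : ‖(φ i₀ - ψ i₀) - ∑ m ∈ s, l m • (φ m - ψ m)‖
        ≤ δ * (1 + Real.sqrt t2) := by
      calc ‖(φ i₀ - ψ i₀) - ∑ m ∈ s, l m • (φ m - ψ m)‖
          ≤ ‖φ i₀ - ψ i₀‖ + ‖∑ m ∈ s, l m • (φ m - ψ m)‖ := norm_sub_le _ _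
        _ ≤ δ + ∑ m ∈ s, ‖l m • (φ m - ψ m)‖ :=
            add_le_add (hdk i₀) (norm_sum_le _ _)
        _ ≤ δ + ∑ m ∈ s, Real.sqrt t2 * ‖φ m - ψ m‖ := by
            apply add_le_add le_rfl
            apply Finset.sum_le_sum
            intro m hm
            rw [norm_smul, Real.norm_eq_abs]
            exact mul_le_mul_of_nonneg_right (hlm m hm) (norm_nonneg _)
        _ = δ + Real.sqrt t2 * ∑ m ∈ s, ‖φ m - ψ m‖ := by rw [Finset.mul_sum]
        _ ≤ δ + Real.sqrt t2 * δ := by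
            apply add_le_add le_rfl
            apply mul_le_mul_of_nonneg_left _ (Real.sqrt_nonneg _)
            exact le_trans (hsum.sum_le_tsum s (fun m _ => norm_nonneg _)) hle
        _ = δ * (1 + Real.sqrt t2) := by ring
    -- combine
    have hdecomp2 : ψ i₀ - ∑ m ∈ s, l m • ψ m
        = (φ i₀ - ∑ m ∈ s, l m • φ m)
          - ((φ i₀ - ψ i₀) - ∑ m ∈ s, l m • (φ m - ψ m)) := by
      simp only [smul_sub, Finset.sum_sub_distrib]
      abel
    have hmain : ‖φ i₀ - ∑ m ∈ s, l m • φ m‖ ≥ Real.sqrt A * Real.sqrt (1 + t2) := by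
      rw [← Real.sqrt_mul (le_trans hA.le le_rfl : (0:ℝ) ≤ A)]
      have : Real.sqrt (A * (1 + t2)) ≤ Real.sqrt (‖φ i₀ - ∑ m ∈ s, l m • φ m‖ ^ 2) :=
        Real.sqrt_le_sqrt hAbound
      rwa [Real.sqrt_sq (norm_nonneg _)] at this
    have hquad : 1 + Real.sqrt t2 ≤ Real.sqrt 2 * Real.sqrt (1 + t2) := by
      rw [← Real.sqrt_mul (by norm_num : (0:ℝ) ≤ 2)]
      have h1 : (1 + Real.sqrt t2)^2 ≤ 2 * (1 + t2) := by
        have := Real.sq_sqrt ht2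
        nlinarith [sq_nonneg (Real.sqrt t2 - 1), Real.sqrt_nonneg t2]
      calc 1 + Real.sqrt t2 = Real.sqrt ((1 + Real.sqrt t2)^2) := by
            rw [Real.sqrt_sq (by positivity)]
        _ ≤ Real.sqrt (2 * (1 + t2)) := Real.sqrt_le_sqrt h1
    have hsq1 : (1:ℝ) ≤ Real.sqrt (1 + t2) := by
      have h := Real.sqrt_le_sqrt (show (1:ℝ) ≤ 1 + t2 by linarith)
      simpa using h
    rw [hcomb]
    calc r = r * 1 := (mul_one r).symm
      _ ≤ r * Real.sqrt (1 + t2) := mul_le_mul_of_nonneg_left hsq1 hrpos.le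
      _ = Real.sqrt A * Real.sqrt (1 + t2) - Real.sqrt 2 * δ * Real.sqrt (1 + t2) := by
          rw [hrdef]; ring
      _ ≤ ‖φ i₀ - ∑ m ∈ s, l m • φ m‖
          - ‖(φ i₀ - ψ i₀) - ∑ m ∈ s, l m • (φ m - ψ m)‖ := by
          have : δ * (1 + Real.sqrt t2) ≤ Real.sqrt 2 * δ * Real.sqrt (1 + t2) := by
            calc δ * (1 + Real.sqrt t2) ≤ δ * (Real.sqrt 2 * Real.sqrt (1 + t2)) :=
                  mul_le_mul_of_nonneg_left hquad hδpos.le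
              _ = Real.sqrt 2 * δ * Real.sqrt (1 + t2) := by ring
          linarith [herr.trans this, hmain]
      _ ≤ ‖ψ i₀ - ∑ m ∈ s, l m • ψ m‖ := by
          rw [hdecomp2]
          have hns := norm_sub_norm_le (φ i₀ - ∑ m ∈ s, l m • φ m)
            ((φ i₀ - ψ i₀) - ∑ m ∈ s, l m • (φ m - ψ m))
          linarith
  -- extend the lower bound to the closure, getting ‖p‖ ≥ r
  have hpr : r ≤ ‖p‖ := by
    have hPmem : (Submodule.orthogonalProjection V (ψ i₀) : H)
        ∈ closure ((Submodule.span ℝ (ψ '' {m | m ≠ i₀}) : Submodule ℝ H) : Set H) := by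
      rw [← Submodule.topologicalClosure_coe]
      exact (Submodule.orthogonalProjection V (ψ i₀)).2
    have hclosed : IsClosed {v : H | r ≤ ‖ψ i₀ - v‖} := by
      exact isClosed_le continuous_const ((continuous_const.sub continuous_id).norm)
    have hsub : ((Submodule.span ℝ (ψ '' {m | m ≠ i₀}) : Submodule ℝ H) : Set H)
        ⊆ {v : H | r ≤ ‖ψ i₀ - v‖} := fun v hv => hlow v hv
    exact closure_minimal hsub hclosed hPmem
  have hppos : 0 < ‖p‖ := lt_of_lt_of_le hrpos hpr
  have hpψ : ⟪p, ψ i₀⟫ = ‖p‖ ^ 2 := by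
    have : ψ i₀ = p + (Submodule.orthogonalProjection V (ψ i₀) : H) := by rw [hpdef]; abel
    rw [this, inner_add_right, real_inner_self_eq_norm_sq,
      hpV _ (Submodule.orthogonalProjection V (ψ i₀)).2, add_zero]
  -- the Gram-Schmidt vector
  set t : ℝ := ⟪ψ j₀, ψ i₀⟫ / ‖ψ i₀‖ ^ 2 with htdef
  set w : H := ψ j₀ - t • ψ i₀ with hwdef
  have hne : ‖ψ i₀‖ ^ 2 ≠ 0 := pow_ne_zero _ (norm_ne_zero_iff.mpr hψi0)
  have hwψ : ⟪w, ψ i₀⟫ = 0 := by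
    rw [hwdef, inner_sub_left, real_inner_smul_left, htdef,
      real_inner_self_eq_norm_sq, div_mul_cancel₀ _ hne, sub_self]
  -- apply norm retrieval to w + p and w - p
  have hmatch : ∀ m, |⟪w + p, ψ m⟫| = |⟪w - p, ψ m⟫| := by
    intro m
    have e1 : ⟪w + p, ψ m⟫ = ⟪w, ψ m⟫ + ⟪p, ψ m⟫ := inner_add_left _ _ _
    have e2 : ⟪w - p, ψ m⟫ = ⟪w, ψ m⟫ - ⟪p, ψ m⟫ := inner_sub_left _ _ _
    rw [e1, e2]
    by_cases hm : m = i₀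
    · subst hm
      rw [hwψ, zero_add, zero_sub, abs_neg]
    · rw [hpψm m hm, add_zero, sub_zero]
  clear_value V p t w
  have hnorm : ‖w + p‖ = ‖w - p‖ := hNR (w + p) (w - p) hmatch
  have hwp : ⟪w, p⟫ = 0 := by
    have h1 := norm_add_sq_real w p
    have h2 := norm_sub_sq_real w p
    have h3 : ‖w + p‖ ^ 2 = ‖w - p‖ ^ 2 := by rw [hnorm]
    linarith [h1, h2, h3]
  -- conclude: t = 0 hence ⟪ψ j₀, ψ i₀⟫ = 0, contradiction
  have hjp : ⟪ψ j₀, p⟫ = 0 := by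
    rw [real_inner_comm]; exact hpψm j₀ (Ne.symm hij)
  have hip : ⟪ψ i₀, p⟫ = ‖p‖ ^ 2 := by rw [real_inner_comm]; exact hpψ
  have hwp2 : ⟪w, p⟫ = -(t * ‖p‖ ^ 2) := by
    rw [hwdef, inner_sub_left, real_inner_smul_left, hjp, hip]; ring
  have ht0 : t = 0 := by
    rw [hwp2] at hwp
    have : t * ‖p‖ ^ 2 = 0 := by linarith
    rcases mul_eq_zero.mp this with h | h
    · exact h
    · exact absurd h (by positivity)
  have : ⟪ψ j₀, ψ i₀⟫ = 0 := by
    have hne : ‖ψ i₀‖ ^ 2 ≠ 0 := by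
      have : 0 < ‖ψ i₀‖ := norm_pos_iff.mpr hψi0
      positivity
    rw [htdef, div_eq_zero_iff] at ht0
    rcases ht0 with h | h
    · exact h
    · exact absurd h hne
  exact hc' (by rw [real_inner_comm]; exact this)
end

section
/- A family of vectors {f_k}_{k=1}^∞ in a real Hilbert space H does norm retrieval if and only if for every subset I ⊆ ℕ, the orthogonal complement of the closed span of {f_k}_{k∈I} is orthogonal to the orthogonal complement of the closed span of {f_k}_{k∈I^c}; that is, ⟨x, y⟩ = 0 whenever x ⊥ f_k for all k ∈ I and y ⊥ f_k for all k ∈ I^c. -/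
open RealInnerProductSpace

/-- Characterization of norm retrieval: a family `{f k}` in a real Hilbert space does
norm retrieval if and only if for every subset `I ⊆ ℕ`, the orthogonal complement of the
closed span of `{f k : k ∈ I}` is orthogonal to the orthogonal complement of the closed
span of `{f k : k ∈ Iᶜ}`. -/
theorem norm_retrieval_iff_perp_complements
    {H : Type*} [NormedAddCommGroup H] [InnerProductSpace ℝ H] [CompleteSpace H]
    (f : ℕ → H) :
    (∀ x y : H, (∀ k, |⟪x, f k⟫| = |⟪y, f k⟫|) → ‖x‖ = ‖y‖) ↔
    (∀ I : Set ℕ, ∀ x y : H,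
      (∀ k ∈ I, ⟪x, f k⟫ = 0) → (∀ k ∉ I, ⟪y, f k⟫ = 0) → ⟪x, y⟫ = 0) := by
  constructor
  · intro h I x y hx hy
    have key : ‖x + y‖ = ‖x - y‖ := by
      apply h
      intro k
      by_cases hk : k ∈ I
      · rw [inner_add_left, inner_sub_left, hx k hk]
        simp
      · rw [inner_add_left, inner_sub_left, hy k hk]
        simp
    have h4 := re_inner_eq_norm_add_mul_self_sub_norm_sub_mul_self_div_four (𝕜 := ℝ) x y
    simp only [RCLike.re_to_real] at h4
    rw [h4, key]
    ring
  · intro h x y hxy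
    have key : ⟪x - y, x + y⟫ = 0 := by
      apply h {k | ⟪x - y, f k⟫ = 0}
      · intro k hk; exact hk
      · intro k hk
        have := hxy k
        have habs : ⟪x, f k⟫ = ⟪y, f k⟫ ∨ ⟪x, f k⟫ = -⟪y, f k⟫ :=
          abs_eq_abs.mp this
        rcases habs with h1 | h1
        · exfalso; apply hk
          simp only [Set.mem_setOf_eq, inner_sub_left, h1, sub_self]
        · rw [inner_add_left, h1]; ring
    have expand : ⟪x - y, x + y⟫ = ‖x‖ ^ 2 - ‖y‖ ^ 2 := by
      rw [inner_sub_left, inner_add_right, inner_add_right,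
        real_inner_self_eq_norm_sq, real_inner_self_eq_norm_sq,
        real_inner_comm y x]
      ring
    have hsq : ‖x‖ ^ 2 = ‖y‖ ^ 2 := by
      have := expand.symm.trans key
      linarith
    rw [← Real.sqrt_sq (norm_nonneg x), ← Real.sqrt_sq (norm_nonneg y), hsq]
end
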